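/- arXiv:1809.05716 — 2 statements merged into one kernel-verified Lean document; each statement's English description precedes it below -/
import Mathlib

section
/- Let V > 0 and let U : ℝ → ℝ be concave and differentiable on [0,1] with U'(0) < V. Let b(l) ∈ [0,1] and s(l) ∈ [0,1] be arbitrary sequences, and define sequences λ(l) ≥ 0 and r̄(l) ∈ [0,1] by: λ(0) ≤ V + 1; r̄(l) is a maximizer over α ∈ [0,1] of U(α) − λ(l)·α; and λ(l+1) = max(0, λ(l) + b(l)·(r̄(l) − s(l))). Then λ(l) ≤ V + 1 for every l ≥ 0. -/
/-! Once `λ(l) > V > U'(0)`, concavity puts every chord of `U` from `0` below the line of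
slope `U'(0) < λ(l)`, so the maximizer `r̄(l)` is `0` and the update cannot increase `λ`.
While `λ(l) ≤ V`, one step adds at most `b(l)·r̄(l) ≤ 1`. -/

open Set

theorem ConcaveOn.le_of_hasDerivAt_lt_of_sub_mul_le {S : Set ℝ} {U : ℝ → ℝ} {a r d c : ℝ}
    (hU : ConcaveOn ℝ S U) (ha : a ∈ S) (hr : r ∈ S) (hd : HasDerivAt U d a) (hdc : d < c)
    (hle : U a - c * a ≤ U r - c * r) : r ≤ a := by
  by_contra! har
  have hslope : slope U a r ≤ d := hU.slope_le_of_hasDerivAt ha hr har hd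
  rw [slope_def_field, div_le_iff₀ (sub_pos.2 har)] at hslope
  nlinarith

theorem mul_sub_le_one {b r s : ℝ} (hb : b ∈ Icc (0 : ℝ) 1) (hr : r ∈ Icc (0 : ℝ) 1)
    (hs : 0 ≤ s) : b * (r - s) ≤ 1 := by
  nlinarith [hb.1, hb.2, hr.1, hr.2]

theorem stmt0_general (V : ℝ) (hV : 0 < V)
    (U U' : ℝ → ℝ)
    (hconc : ConcaveOn ℝ (Set.Icc (0:ℝ) 1) U)
    (hderiv : ∀ y ∈ Set.Icc (0:ℝ) 1, HasDerivAt U (U' y) y)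
    (hU'0 : U' 0 < V)
    (b s lam rbar : ℕ → ℝ)
    (hb : ∀ l, b l ∈ Set.Icc (0:ℝ) 1)
    (hs : ∀ l, s l ∈ Set.Icc (0:ℝ) 1)
    (hlam0 : lam 0 ≤ V + 1)
    (hrbar : ∀ l, rbar l ∈ Set.Icc (0:ℝ) 1)
    (hmax : ∀ l, ∀ α ∈ Set.Icc (0:ℝ) 1, U α - lam l * α ≤ U (rbar l) - lam l * rbar l)
    (hupd : ∀ l, lam (l + 1) = max 0 (lam l + b l * (rbar l - s l))) :
    ∀ l, lam l ≤ V + 1 := by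
  intro l
  induction l with
  | zero => exact hlam0
  | succ n ih =>
    rw [hupd n]
    refine max_le (by linarith) ?_
    rcases le_or_gt (lam n) V with hle | hgt
    · linarith [mul_sub_le_one (hb n) (hrbar n) (hs n).1]
    · have h0 : (0 : ℝ) ∈ Icc (0 : ℝ) 1 := left_mem_Icc.2 zero_le_one
      have hr0 : rbar n ≤ 0 :=
        hconc.le_of_hasDerivAt_lt_of_sub_mul_le h0 (hrbar n) (hderiv 0 h0) (hU'0.trans hgt)
          (hmax n 0 h0)
      have hstep : b n * (rbar n - s n) ≤ 0 :=
        mul_nonpos_of_nonneg_of_nonpos (hb n).1 (by linarith [(hs n).1])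
      linarith

/-- Boundedness of the dual (weight) variable in the C-NUM subgradient update:
if `λ(0) ≤ V + 1`, `U` is concave and differentiable on `[0,1]` with `U'(0) < V`,
`r̄(l)` maximizes `U(α) − λ(l)·α` over `α ∈ [0,1]`, and
`λ(l+1) = [λ(l) + b(l)(r̄(l) − s(l))]⁺` with `b(l), s(l) ∈ [0,1]`,
then `λ(l) ≤ V + 1` for every `l`. -/
theorem stmt0 (V : ℝ) (hV : 0 < V)
    (U U' : ℝ → ℝ)
    (hconc : ConcaveOn ℝ (Set.Icc (0:ℝ) 1) U)
    (hderiv : ∀ y ∈ Set.Icc (0:ℝ) 1, HasDerivAt U (U' y) y)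
    (hU'0 : U' 0 < V)
    (b s lam rbar : ℕ → ℝ)
    (hb : ∀ l, b l ∈ Set.Icc (0:ℝ) 1)
    (hs : ∀ l, s l ∈ Set.Icc (0:ℝ) 1)
    (hlam_nonneg : ∀ l, 0 ≤ lam l)
    (hlam0 : lam 0 ≤ V + 1)
    (hrbar : ∀ l, rbar l ∈ Set.Icc (0:ℝ) 1)
    (hmax : ∀ l, ∀ α ∈ Set.Icc (0:ℝ) 1, U α - lam l * α ≤ U (rbar l) - lam l * rbar l)
    (hupd : ∀ l, lam (l + 1) = max 0 (lam l + b l * (rbar l - s l))) :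
    ∀ l, lam l ≤ V + 1 :=
  stmt0_general V hV U U' hconc hderiv hU'0 b s lam rbar hb hs hlam0 hrbar hmax hupd
end

section
/- Let A be a finite nonempty set, N ≥ 1, and for each i ∈ {1,…,N} let r_i : A → [0,1] and U_i : ℝ → ℝ. Fix b ≥ 0, weights λ_i ≥ 0, a probability vector p on A, values s_i ∈ [0,1], and r*_i ∈ [0,1] with r*_i ≤ Σ_a p(a)·r_i(a). Let r̄_i ∈ [0,1] maximize U_i(α) − λ_i·α over α ∈ [0,1]; define s_i(λ) = Σ_a p(a)·r_i(a), the subgradient error δ(λ) = max_{a∈A} Σ_i λ_i·r_i(a) − Σ_a p(a)·Σ_i λ_i·r_i(a), the sampling error e = Σ_i λ_i·(s_i(λ) − s_i), and the updated weights λ'_i = max(0, λ_i + b·(r̄_i − s_i)). Then Σ_i (λ'_i)² ≤ Σ_i λ_i² + N·b² + 2·b·e + 2·b·δ(λ) + 2·b·Σ_i (U_i(r̄_i) − U_i(r*_i)). -/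
/-!
Writing `d_i = r̄_i − s_i ∈ [−1, 1]`, the projection onto `[0, ∞)` only shrinks squares, so
`(λ'_i)² ≤ (λ_i + b d_i)² ≤ λ_i² + b² + 2b λ_i d_i`. It remains to bound `Σ_i λ_i d_i`.
Since `r̄_i` maximizes `U_i(α) − λ_i α` on `[0, 1]`, comparing with `α = r*_i` and using
`r*_i ≤ s_i(λ)` gives `λ_i r̄_i ≤ U_i(r̄_i) − U_i(r*_i) + λ_i s_i(λ)`, so
`Σ_i λ_i d_i ≤ e + Σ_i (U_i(r̄_i) − U_i(r*_i))`; finally `δ(λ) ≥ 0`, an average being at most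
the maximum.
-/

open Finset

lemma sq_max_zero_add_mul_le (x b d : ℝ) (hd : |d| ≤ 1) :
    (max 0 (x + b * d)) ^ 2 ≤ x ^ 2 + b ^ 2 + 2 * b * (x * d) := by
  have hproj : (max 0 (x + b * d)) ^ 2 ≤ (x + b * d) ^ 2 := by
    rcases le_total 0 (x + b * d) with h | h
    · rw [max_eq_right h]
    · rw [max_eq_left h, zero_pow two_ne_zero]; exact sq_nonneg _
  have hd2 : d ^ 2 ≤ 1 := (sq_le_one_iff_abs_le_one d).2 hd
  nlinarith [mul_le_mul_of_nonneg_left hd2 (sq_nonneg b)]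

lemma sum_sq_max_zero_add_mul_le {ι : Type*} [Fintype ι] (x d : ι → ℝ) (b : ℝ)
    (hd : ∀ i, |d i| ≤ 1) :
    ∑ i, (max 0 (x i + b * d i)) ^ 2 ≤
      ∑ i, x i ^ 2 + Fintype.card ι * b ^ 2 + 2 * b * ∑ i, x i * d i := by
  calc ∑ i, (max 0 (x i + b * d i)) ^ 2
      ≤ ∑ i, (x i ^ 2 + b ^ 2 + 2 * b * (x i * d i)) :=
        sum_le_sum fun i _ => sq_max_zero_add_mul_le (x i) b (d i) (hd i)
    _ = _ := by simp only [sum_add_distrib, sum_const, card_univ, nsmul_eq_mul, mul_sum]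

lemma sum_mul_le_sup' {α : Type*} [Fintype α] [Nonempty α] (p f : α → ℝ)
    (hp : ∀ a, 0 ≤ p a) (hp1 : ∑ a, p a = 1) :
    ∑ a, p a * f a ≤ univ.sup' univ_nonempty f := by
  have h := centerMass_le_sup (s := univ) (f := f) (fun a _ => hp a) (by rw [hp1]; exact one_pos)
  rwa [centerMass_eq_of_sum_1 _ _ hp1] at h

theorem stmt9_general {A : Type*} [Fintype A] [Nonempty A] (N : ℕ)
    (r : Fin N → A → ℝ)
    (U : Fin N → ℝ → ℝ) (b : ℝ) (hb : 0 ≤ b)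
    (lam : Fin N → ℝ) (hlam : ∀ i, 0 ≤ lam i)
    (p : A → ℝ) (hp : ∀ a, 0 ≤ p a) (hp1 : ∑ a, p a = 1)
    (s : Fin N → ℝ) (hs : ∀ i, s i ∈ Set.Icc (0:ℝ) 1)
    (rstar : Fin N → ℝ) (hrstar : ∀ i, rstar i ∈ Set.Icc (0:ℝ) 1)
    (hfeas : ∀ i, rstar i ≤ ∑ a, p a * r i a)
    (rbar : Fin N → ℝ) (hrbar : ∀ i, rbar i ∈ Set.Icc (0:ℝ) 1)
    (hmax : ∀ i, ∀ α ∈ Set.Icc (0:ℝ) 1,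
      U i α - lam i * α ≤ U i (rbar i) - lam i * rbar i) :
    ∑ i, (max 0 (lam i + b * (rbar i - s i))) ^ 2 ≤
      ∑ i, (lam i) ^ 2 + N * b ^ 2
        + 2 * b * (∑ i, lam i * ((∑ a, p a * r i a) - s i))
        + 2 * b * ((Finset.univ.sup' Finset.univ_nonempty
              fun a => ∑ i, lam i * r i a)
            - ∑ a, p a * ∑ i, lam i * r i a)
        + 2 * b * (∑ i, (U i (rbar i) - U i (rstar i))) := by
  have hdrift := sum_sq_max_zero_add_mul_le lam (fun i => rbar i - s i) b fun i =>
    abs_le.2 ⟨by linarith [(hrbar i).1, (hs i).2], by linarith [(hrbar i).2, (hs i).1]⟩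
  rw [Fintype.card_fin] at hdrift
  have hgap : ∑ i, lam i * (rbar i - s i) ≤
      ∑ i, lam i * ((∑ a, p a * r i a) - s i) + ∑ i, (U i (rbar i) - U i (rstar i)) := by
    rw [← sum_add_distrib]
    refine sum_le_sum fun i _ => ?_
    have hfeas' := mul_le_mul_of_nonneg_left (hfeas i) (hlam i)
    linarith [hmax i (rstar i) (hrstar i)]
  have hδ := sub_nonneg.2 (sum_mul_le_sup' p (fun a => ∑ i, lam i * r i a) hp hp1)
  linarith [mul_le_mul_of_nonneg_left hgap hb, mul_nonneg hb hδ]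

/-- Per-frame Lyapunov drift inequality of the C-NUM analysis: with
`λ'_i = [λ_i + b(r̄_i − s_i)]⁺`, `s_i(λ) = Σ_a p(a)r_i(a)`,
`δ(λ) = max_a Σ_i λ_i r_i(a) − Σ_a p(a) Σ_i λ_i r_i(a)` and
`e = Σ_i λ_i(s_i(λ) − s_i)`, one has
`Σ_i (λ'_i)² ≤ Σ_i λ_i² + N·b² + 2b·e + 2b·δ(λ) + 2b·Σ_i (U_i(r̄_i) − U_i(r*_i))`. -/
theorem stmt9 {A : Type*} [Fintype A] [Nonempty A] (N : ℕ) (hN : 1 ≤ N)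
    (r : Fin N → A → ℝ) (hr : ∀ i a, r i a ∈ Set.Icc (0:ℝ) 1)
    (U : Fin N → ℝ → ℝ) (b : ℝ) (hb : 0 ≤ b)
    (lam : Fin N → ℝ) (hlam : ∀ i, 0 ≤ lam i)
    (p : A → ℝ) (hp : ∀ a, 0 ≤ p a) (hp1 : ∑ a, p a = 1)
    (s : Fin N → ℝ) (hs : ∀ i, s i ∈ Set.Icc (0:ℝ) 1)
    (rstar : Fin N → ℝ) (hrstar : ∀ i, rstar i ∈ Set.Icc (0:ℝ) 1)
    (hfeas : ∀ i, rstar i ≤ ∑ a, p a * r i a)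
    (rbar : Fin N → ℝ) (hrbar : ∀ i, rbar i ∈ Set.Icc (0:ℝ) 1)
    (hmax : ∀ i, ∀ α ∈ Set.Icc (0:ℝ) 1,
      U i α - lam i * α ≤ U i (rbar i) - lam i * rbar i) :
    ∑ i, (max 0 (lam i + b * (rbar i - s i))) ^ 2 ≤
      ∑ i, (lam i) ^ 2 + N * b ^ 2
        + 2 * b * (∑ i, lam i * ((∑ a, p a * r i a) - s i))
        + 2 * b * ((Finset.univ.sup' Finset.univ_nonempty
              fun a => ∑ i, lam i * r i a)
            - ∑ a, p a * ∑ i, lam i * r i a)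
        + 2 * b * (∑ i, (U i (rbar i) - U i (rstar i))) :=
  stmt9_general N r U b hb lam hlam p hp hp1 s hs rstar hrstar hfeas rbar hrbar hmax
end
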